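/- arXiv:1405.2238 — 4 statements merged into one kernel-verified Lean document; each statement's English description precedes it below -/
import Mathlib

section
/- Every maxitive measure on a prepaving is alternating of infinite order: if ν is a maxitive measure on a prepaving 𝓔 on a nonempty set E, then (−1)^{n+1} Δ_{G₁}⋯Δ_{Gₙ} ν(G) ≥ 0 for all n ≥ 1 and all G, G₁, …, Gₙ ∈ 𝓔. -/
/-!
Along a maxitive measure `ν`, the Choquet difference `Δ_{G₁} (F ∘ ν) (G)` only depends on `ν G`:
it is `F (ν G ⊔ ν G₁) - F (ν G)`. So the iterated differences of `ν` are functions of `ν G`,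
obtained from the identity by the operators `F ↦ (a ↦ F (a ⊔ b) - F a)`. Such an operator
vanishes for `a ≥ b` and equals `F b - F a` for `a < b`; hence it turns a monotone `F` into a
nonnegative antitone function and an antitone `F` into a nonpositive monotone one.
-/

open scoped ENNReal
open Set

/-- Subtraction on extended reals with the conventions `∞ - ∞ = 0` and `-∞ + ∞ = 0`
(i.e. `-∞ - (-∞) = 0`). -/
noncomputable def esub (x y : EReal) : EReal :=
  if (x = ⊤ ∧ y = ⊤) ∨ (x = ⊥ ∧ y = ⊥) then 0 else x - y

/-- The Choquet difference operator `Δ_{G₁} f (G) = f (G ∪ G₁) - f G`. -/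
noncomputable def choquetDiff {E : Type*} (G₁ : Set E) (f : Set E → EReal) :
    Set E → EReal :=
  fun G => esub (f (G ∪ G₁)) (f G)

/-- Iterated Choquet difference: `iterDiff [G₁, …, Gₙ] f = Δ_{G₁} (Δ_{G₂} ⋯ Δ_{Gₙ} f)`. -/
noncomputable def iterDiff {E : Type*} (l : List (Set E)) (f : Set E → EReal) :
    Set E → EReal :=
  l.foldr choquetDiff f

lemma esub_self (x : EReal) : esub x x = 0 := by
  induction x using EReal.rec <;> simp [esub]

-- `esub` only replaces the value `⊥` of `⊤ - ⊤` and `⊥ - ⊥` by `0`, which keeps antitonicity.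
lemma esub_antitone_right (x : EReal) : Antitone (esub x) := by
  intro y y' h
  induction x using EReal.rec <;> induction y using EReal.rec <;>
    induction y' using EReal.rec <;> (simp_all [esub, ← EReal.coe_sub]; try linarith)

lemma esub_nonneg {x y : EReal} (h : y ≤ x) : 0 ≤ esub x y :=
  esub_self x ▸ esub_antitone_right x h

lemma esub_nonpos {x y : EReal} (h : x ≤ y) : esub x y ≤ 0 :=
  esub_self x ▸ esub_antitone_right x h

section SupDiff

variable {α : Type*} [LinearOrder α] {F : α → EReal}

noncomputable def supDiff (b : α) (F : α → EReal) (a : α) : EReal :=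
  esub (F (a ⊔ b)) (F a)

noncomputable def iterSupDiff (bs : List α) (F : α → EReal) : α → EReal :=
  bs.foldr supDiff F

lemma supDiff_of_le (F : α → EReal) {a b : α} (h : b ≤ a) : supDiff b F a = 0 := by
  rw [supDiff, sup_eq_left.mpr h, esub_self]

lemma Monotone.supDiff_nonneg (hF : Monotone F) (b a : α) : 0 ≤ supDiff b F a :=
  esub_nonneg (hF le_sup_left)

lemma Antitone.supDiff_nonpos (hF : Antitone F) (b a : α) : supDiff b F a ≤ 0 :=
  esub_nonpos (hF le_sup_left)

lemma Monotone.antitone_supDiff (hF : Monotone F) (b : α) : Antitone (supDiff b F) := by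
  intro a a' h
  rcases le_or_gt b a' with hba' | ha'b
  · rw [supDiff_of_le F hba']
    exact hF.supDiff_nonneg b a
  · have hab : a ≤ b := h.trans ha'b.le
    simp only [supDiff, sup_eq_right.mpr hab, sup_eq_right.mpr ha'b.le]
    exact esub_antitone_right _ (hF h)

lemma Antitone.monotone_supDiff (hF : Antitone F) (b : α) : Monotone (supDiff b F) := by
  intro a a' h
  rcases le_or_gt b a' with hba' | ha'b
  · rw [supDiff_of_le F hba']
    exact hF.supDiff_nonpos b a
  · have hab : a ≤ b := h.trans ha'b.le
    simp only [supDiff, sup_eq_right.mpr hab, sup_eq_right.mpr ha'b.le]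
    exact esub_antitone_right _ (hF h)

lemma Monotone.iterSupDiff_alternating (hF : Monotone F) (bs : List α) :
    (Even bs.length → Monotone (iterSupDiff bs F)) ∧
      (Odd bs.length → Antitone (iterSupDiff bs F)) := by
  induction bs with
  | nil => exact ⟨fun _ => hF, fun h => absurd h (by simp)⟩
  | cons b bs ih =>
    simp only [List.length_cons, Nat.even_add_one, Nat.odd_add_one, Nat.not_even_iff_odd,
      Nat.not_odd_iff_even]
    exact ⟨fun h => (ih.2 h).monotone_supDiff b, fun h => (ih.1 h).antitone_supDiff b⟩

lemma Monotone.neg_one_pow_mul_iterSupDiff_nonneg (hF : Monotone F) {bs : List α}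
    (hbs : bs ≠ []) (a : α) : 0 ≤ (-1 : EReal) ^ (bs.length + 1) * iterSupDiff bs F a := by
  obtain ⟨b, bs, rfl⟩ := List.exists_cons_of_ne_nil hbs
  change 0 ≤ (-1 : EReal) ^ (bs.length + 2) * supDiff b (iterSupDiff bs F) a
  rcases Nat.even_or_odd bs.length with he | ho
  · rw [(he.add even_two).neg_one_pow, one_mul]
    exact ((hF.iterSupDiff_alternating bs).1 he).supDiff_nonneg b a
  · rw [(ho.add_even even_two).neg_one_pow, neg_one_mul, ← EReal.neg_le_neg_iff, neg_neg,
      neg_zero]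
    exact ((hF.iterSupDiff_alternating bs).2 ho).supDiff_nonpos b a

end SupDiff

lemma iterDiff_comp_eq_iterSupDiff {E α : Type*} [LinearOrder α] {𝓔 : Set (Set E)}
    (h_union : ∀ G G' : Set E, G ∈ 𝓔 → G' ∈ 𝓔 → G ∪ G' ∈ 𝓔) {ν : Set E → α}
    (hν_max : ∀ G G' : Set E, G ∈ 𝓔 → G' ∈ 𝓔 → ν (G ∪ G') = max (ν G) (ν G'))
    (F : α → EReal) {l : List (Set E)} (hl_mem : ∀ G ∈ l, G ∈ 𝓔) {G : Set E} (hG : G ∈ 𝓔) :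
    iterDiff l (fun A => F (ν A)) G = iterSupDiff (l.map ν) F (ν G) := by
  induction l generalizing G with
  | nil => rfl
  | cons G₁ l ih =>
    have hG₁ : G₁ ∈ 𝓔 := hl_mem G₁ List.mem_cons_self
    have hl : ∀ G ∈ l, G ∈ 𝓔 := fun G hG => hl_mem G (List.mem_cons_of_mem _ hG)
    change esub (iterDiff l _ (G ∪ G₁)) (iterDiff l _ G) = esub (iterSupDiff _ F (ν G ⊔ ν G₁)) _
    rw [ih hl (h_union G G₁ hG hG₁), ih hl hG, hν_max G G₁ hG hG₁]
    rfl

theorem maxitive_measure_alternating_general {E : Type*} (𝓔 : Set (Set E))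
    (h_union : ∀ G G' : Set E, G ∈ 𝓔 → G' ∈ 𝓔 → G ∪ G' ∈ 𝓔)
    (ν : Set E → ℝ≥0∞)
    (hν_max : ∀ G G' : Set E, G ∈ 𝓔 → G' ∈ 𝓔 → ν (G ∪ G') = max (ν G) (ν G'))
    (l : List (Set E)) (hl : l ≠ []) (hl_mem : ∀ G ∈ l, G ∈ 𝓔)
    (G : Set E) (hG : G ∈ 𝓔) :
    0 ≤ (-1 : EReal) ^ (l.length + 1) * iterDiff l (fun A => ((ν A : EReal))) G := by
  rw [iterDiff_comp_eq_iterSupDiff h_union hν_max _ hl_mem hG, ← List.length_map ν]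
  exact EReal.coe_ennreal_strictMono.monotone.neg_one_pow_mul_iterSupDiff_nonneg
    (mt List.map_eq_nil_iff.1 hl) (ν G)

/-- Every maxitive measure on a prepaving is alternating of infinite order:
for every `n ≥ 1` (here `n = l.length` with `l = [G₁, …, Gₙ]` a nonempty list of
elements of the prepaving `𝓔`) and every `G ∈ 𝓔`,
`(-1)^(n+1) * Δ_{G₁} ⋯ Δ_{Gₙ} ν (G) ≥ 0`. -/
theorem maxitive_measure_alternating {E : Type*} [Nonempty E] (𝓔 : Set (Set E))
    (h_empty : (∅ : Set E) ∈ 𝓔)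
    (h_union : ∀ G G' : Set E, G ∈ 𝓔 → G' ∈ 𝓔 → G ∪ G' ∈ 𝓔)
    (ν : Set E → ℝ≥0∞) (hν_empty : ν ∅ = 0)
    (hν_max : ∀ G G' : Set E, G ∈ 𝓔 → G' ∈ 𝓔 → ν (G ∪ G') = max (ν G) (ν G'))
    (l : List (Set E)) (hl : l ≠ []) (hl_mem : ∀ G ∈ l, G ∈ 𝓔)
    (G : Set E) (hG : G ∈ 𝓔) :
    0 ≤ (-1 : EReal) ^ (l.length + 1) * iterDiff l (fun A => ((ν A : EReal))) G :=
  maxitive_measure_alternating_general 𝓔 h_union ν hν_max l hl hl_mem G hG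
end

section
/- Let ν be a maxitive measure on a σ-algebra 𝓑 admitting a 𝓑-measurable cardinal density c (i.e. ν(B) = sup_{x∈B} c(x) for all B ∈ 𝓑). Then for every maxitive measure τ on 𝓑, ν ≪ τ if and only if ν ⋘ τ. In particular, ν is autocontinuous (ν ⋘ ν). -/
open scoped ENNReal
open Set Filter MeasureTheory

variable {E : Type*}

/-- `f : E → [0,∞]` is `𝓑`-measurable: `{f > t}` is measurable for every `t`. -/
def Premeasurable [MeasurableSpace E] (f : E → ℝ≥0∞) : Prop :=
  ∀ t : ℝ≥0∞, MeasurableSet {x | t < f x}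

/-- A maxitive measure on the σ-algebra of measurable subsets of `E`. -/
def Maxitive [MeasurableSpace E] (ν : Set E → ℝ≥0∞) : Prop :=
  ν ∅ = 0 ∧ ∀ A B : Set E, MeasurableSet A → MeasurableSet B →
    ν (A ∪ B) = max (ν A) (ν B)

/-- A σ-maxitive measure: a maxitive measure commuting with countable nondecreasing unions. -/
def SigmaMaxitive [MeasurableSpace E] (ν : Set E → ℝ≥0∞) : Prop :=
  Maxitive ν ∧ ∀ B : ℕ → Set E, (∀ n, MeasurableSet (B n)) → Monotone B →
    ν (⋃ n, B n) = ⨆ n, ν (B n)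

/-- `N` is `τ`-negligible: it is contained in a measurable set of `τ`-measure zero. -/
def Negligible [MeasurableSpace E] (τ : Set E → ℝ≥0∞) (N : Set E) : Prop :=
  ∃ B : Set E, MeasurableSet B ∧ N ⊆ B ∧ τ B = 0

/-- The `τ`-essential supremum of `f` over `B`: `inf { t > 0 : B ∩ {f > t} is τ-negligible }`. -/
noncomputable def essSupOn [MeasurableSpace E] (τ : Set E → ℝ≥0∞) (f : E → ℝ≥0∞)
    (B : Set E) : ℝ≥0∞ :=
  sInf {t : ℝ≥0∞ | 0 < t ∧ Negligible τ (B ∩ {x | t < f x})}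

/-- `ν ≪ τ`: absolute continuity. -/
def AbsCont [MeasurableSpace E] (ν τ : Set E → ℝ≥0∞) : Prop :=
  ∀ B : Set E, MeasurableSet B → τ B = 0 → ν B = 0

/-- `ν ⋘ τ`: strong absolute continuity, i.e. `ν` has a measurable relative density
with respect to `τ`. -/
def StrongAbsCont [MeasurableSpace E] (ν τ : Set E → ℝ≥0∞) : Prop :=
  ∃ f : E → ℝ≥0∞, Premeasurable f ∧ ∀ B : Set E, MeasurableSet B → ν B = essSupOn τ f B

/-- `c` is a cardinal density of `ν`: `ν B = sup_{x ∈ B} c x` for every measurable `B`. -/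
def IsCardinalDensity [MeasurableSpace E] (ν : Set E → ℝ≥0∞) (c : E → ℝ≥0∞) : Prop :=
  ∀ B : Set E, MeasurableSet B → ν B = ⨆ x ∈ B, c x

/-- `τ` is essential: there exists a σ-finite σ-additive measure `m` with the same
null measurable sets. -/
def Essential [MeasurableSpace E] (τ : Set E → ℝ≥0∞) : Prop :=
  ∃ m : Measure E, SigmaFinite m ∧ ∀ B : Set E, MeasurableSet B → (0 < τ B ↔ 0 < m B)

/-- A σ-ideal of the σ-algebra of measurable sets. -/
def SigmaIdeal [MeasurableSpace E] (I : Set (Set E)) : Prop :=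
  I.Nonempty ∧ (∀ S ∈ I, MeasurableSet S) ∧
  (∀ f : ℕ → Set E, (∀ n, f n ∈ I) → (⋃ n, f n) ∈ I) ∧
  (∀ B S : Set E, MeasurableSet B → S ∈ I → B ⊆ S → B ∈ I)

/-- `τ` is σ-principal: every σ-ideal has a greatest element modulo `τ`-negligible sets. -/
def SigmaPrincipal [MeasurableSpace E] (τ : Set E → ℝ≥0∞) : Prop :=
  ∀ I : Set (Set E), SigmaIdeal I → ∃ L ∈ I, ∀ S ∈ I, Negligible τ (S \ L)

/-- A pseudo-multiplication on `[0,∞]`. -/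
structure PseudoMul where
  op : ℝ≥0∞ → ℝ≥0∞ → ℝ≥0∞
  assoc : ∀ a b c, op (op a b) c = op a (op b c)
  contOn : ContinuousOn (fun q : ℝ≥0∞ × ℝ≥0∞ => op q.1 q.2) (Set.Ioo 0 ⊤ ×ˢ Set.univ)
  contLeft : ∀ t, ContinuousOn (fun s => op s t) (Set.Ioi 0)
  monoLeft : ∀ t, Monotone fun s => op s t
  monoRight : ∀ s, Monotone (op s)
  one : ℝ≥0∞
  one_op : ∀ t, op one t = t
  eq_zero : ∀ s t, op s t = 0 → s = 0 ∨ t = 0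
  zero_op : ∀ t, op 0 t = 0
  op_zero : ∀ t, op t 0 = 0

/-- `t` is `⊙`-finite: `inf_{s > 0} s ⊙ t = 0`. -/
def OdotFinite (p : PseudoMul) (t : ℝ≥0∞) : Prop :=
  (⨅ s ∈ Set.Ioi (0 : ℝ≥0∞), p.op s t) = 0

/-- The idempotent `⊙`-integral `∫_B f ⊙ dτ = sup_{t ∈ [0,∞)} t ⊙ τ (B ∩ {f > t})`. -/
noncomputable def iInt [MeasurableSpace E] (p : PseudoMul) (τ : Set E → ℝ≥0∞)
    (f : E → ℝ≥0∞) (B : Set E) : ℝ≥0∞ :=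
  ⨆ t ∈ Set.Iio (⊤ : ℝ≥0∞), p.op t (τ (B ∩ {x | t < f x}))

/-- `ν ≪_⊙ τ`: `ν B ≤ ∞ ⊙ τ B` for every measurable `B`. -/
def OdotAbsCont [MeasurableSpace E] (p : PseudoMul) (ν τ : Set E → ℝ≥0∞) : Prop :=
  ∀ B : Set E, MeasurableSet B → ν B ≤ p.op ⊤ (τ B)

/-- `ν` is semi-`⊙`-finite. -/
def SemiOdotFinite [MeasurableSpace E] (p : PseudoMul) (ν : Set E → ℝ≥0∞) : Prop :=
  ∀ B : Set E, MeasurableSet B →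
    ν B = ⨆ A ∈ {A : Set E | MeasurableSet A ∧ A ⊆ B ∧ OdotFinite p (ν A)}, ν A

/-- `τ` is σ-`⊙`-finite. -/
def SigmaOdotFinite [MeasurableSpace E] (p : PseudoMul) (τ : Set E → ℝ≥0∞) : Prop :=
  ∃ B : ℕ → Set E, (∀ n, MeasurableSet (B n)) ∧ (⋃ n, B n) = Set.univ ∧
    ∀ n, OdotFinite p (τ (B n))

/-- Continuity from below. -/
def ContFromBelow [MeasurableSpace E] (ν : Set E → ℝ≥0∞) : Prop :=
  ∀ B : ℕ → Set E, (∀ n, MeasurableSet (B n)) → Monotone B →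
    Tendsto (fun n => ν (B n)) atTop (nhds (ν (⋃ n, B n)))

/-- Continuity from above (no finiteness assumption). -/
def ContFromAbove [MeasurableSpace E] (ν : Set E → ℝ≥0∞) : Prop :=
  ∀ B : ℕ → Set E, (∀ n, MeasurableSet (B n)) → Antitone B →
    Tendsto (fun n => ν (B n)) atTop (nhds (ν (⋂ n, B n)))

/-- An optimal measure: a maxitive measure continuous from below and from above. -/
def Optimal [MeasurableSpace E] (ν : Set E → ℝ≥0∞) : Prop :=
  Maxitive ν ∧ ContFromBelow ν ∧ ContFromAbove ν

/-! The cardinal density `c` is itself a relative density of `ν` with respect to any `τ` with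
`ν ≪ τ`. Above `sup_B c` the set `B ∩ {c > t}` is empty, so the essential supremum is at most the
supremum. Conversely, if `B ∩ {c > t} ⊆ A` with `τ A = 0`, then `ν A = 0`, and every `x ∈ B` with
`c x > t` would give `0 < c x ≤ ν A`; hence `c ≤ t` on `B`. -/

section

variable [MeasurableSpace E]

theorem Negligible.mono {τ : Set E → ℝ≥0∞} {M N : Set E} (hN : Negligible τ N) (hMN : M ⊆ N) :
    Negligible τ M :=
  let ⟨B, hB, hNB, hτB⟩ := hN
  ⟨B, hB, hMN.trans hNB, hτB⟩

theorem essSupOn_eq_zero_of_negligible {τ : Set E → ℝ≥0∞} (f : E → ℝ≥0∞) {B : Set E}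
    (hB : Negligible τ B) : essSupOn τ f B = 0 :=
  le_antisymm (le_of_forall_gt_imp_ge_of_dense fun _ ht =>
    sInf_le ⟨ht, hB.mono inter_subset_left⟩) zero_le

theorem essSupOn_le_iSup₂ {τ : Set E → ℝ≥0∞} (hτ : τ ∅ = 0) (f : E → ℝ≥0∞) (B : Set E) :
    essSupOn τ f B ≤ ⨆ x ∈ B, f x := by
  refine le_of_forall_gt_imp_ge_of_dense fun t ht => sInf_le ⟨zero_le.trans_lt ht, ?_⟩
  have hempty : B ∩ {x | t < f x} = ∅ :=
    eq_empty_of_forall_notMem fun x ⟨hxB, hxt⟩ =>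
      (le_iSup₂ (f := fun x _ => f x) x hxB).not_gt (ht.trans hxt)
  exact hempty ▸ ⟨∅, MeasurableSet.empty, subset_rfl, hτ⟩

theorem StrongAbsCont.absCont {ν τ : Set E → ℝ≥0∞} (h : StrongAbsCont ν τ) : AbsCont ν τ :=
  fun B hB hτB =>
    let ⟨f, _, hf⟩ := h
    (hf B hB).trans (essSupOn_eq_zero_of_negligible f ⟨B, hB, subset_rfl, hτB⟩)

namespace IsCardinalDensity

variable {ν : Set E → ℝ≥0∞} {c : E → ℝ≥0∞}

theorem le_apply (hcd : IsCardinalDensity ν c) {A : Set E} (hA : MeasurableSet A) {x : E}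
    (hx : x ∈ A) : c x ≤ ν A :=
  (hcd A hA).symm ▸ le_iSup₂ (f := fun x _ => c x) x hx

theorem iSup₂_le_essSupOn (hcd : IsCardinalDensity ν c) {τ : Set E → ℝ≥0∞} (hac : AbsCont ν τ)
    (B : Set E) : ⨆ x ∈ B, c x ≤ essSupOn τ c B := by
  refine le_sInf ?_
  rintro t ⟨ht, A, hA, hsub, hτA⟩
  refine iSup₂_le fun x hxB => not_lt.1 fun hxt => ?_
  have hcx : c x ≤ 0 := hac A hA hτA ▸ hcd.le_apply hA (hsub ⟨hxB, hxt⟩)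
  exact hcx.not_gt (ht.trans hxt)

theorem strongAbsCont (hc : Premeasurable c) (hcd : IsCardinalDensity ν c) {τ : Set E → ℝ≥0∞}
    (hτ : τ ∅ = 0) (hac : AbsCont ν τ) : StrongAbsCont ν τ :=
  ⟨c, hc, fun B hB => (hcd B hB).trans <|
    le_antisymm (hcd.iSup₂_le_essSupOn hac B) (essSupOn_le_iSup₂ hτ c B)⟩

end IsCardinalDensity

end

theorem maxitive_cardinalDensity_absCont_iff_strongAbsCont_general
    [MeasurableSpace E] (ν : Set E → ℝ≥0∞)
    (c : E → ℝ≥0∞) (hc : Premeasurable c) (hcd : IsCardinalDensity ν c) :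
    (∀ τ : Set E → ℝ≥0∞, Maxitive τ → (AbsCont ν τ ↔ StrongAbsCont ν τ)) ∧
    StrongAbsCont ν ν := by
  refine ⟨fun τ hτ => ⟨hcd.strongAbsCont hc hτ.1, StrongAbsCont.absCont⟩, ?_⟩
  exact hcd.strongAbsCont hc (by simpa using hcd ∅ .empty) fun _ _ h => h

/-- A maxitive measure with a measurable cardinal density is strongly absolutely continuous
with respect to every maxitive measure dominating it; in particular it is autocontinuous. -/
theorem maxitive_cardinalDensity_absCont_iff_strongAbsCont
    [MeasurableSpace E] (ν : Set E → ℝ≥0∞) (hν : Maxitive ν)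
    (c : E → ℝ≥0∞) (hc : Premeasurable c) (hcd : IsCardinalDensity ν c) :
    (∀ τ : Set E → ℝ≥0∞, Maxitive τ → (AbsCont ν τ ↔ StrongAbsCont ν τ)) ∧
    StrongAbsCont ν ν :=
  maxitive_cardinalDensity_absCont_iff_strongAbsCont_general ν c hc hcd
end

section
/- Every σ-maxitive measure of bounded variation on a σ-algebra 𝓑 is finite and essential. -/
open scoped ENNReal
open Set Filter MeasureTheory

variable {E : Type*}

/-- A finite measurable partition of `E`. -/
def IsFinMeasPartition [MeasurableSpace E] (π : Finset (Set E)) : Prop :=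
  (∀ B ∈ π, MeasurableSet B) ∧ (π : Set (Set E)).Pairwise Disjoint ∧
    ⋃₀ (π : Set (Set E)) = Set.univ

/-- The (disjoint) variation `|ν|` of a set function `ν`. -/
noncomputable def variation [MeasurableSpace E] (ν : Set E → ℝ≥0∞) : ℝ≥0∞ :=
  ⨆ π ∈ {π : Finset (Set E) | IsFinMeasPartition π}, ∑ B ∈ π, ν B

/-!
Let `|ν|(B)` be the supremum of `∑ ν(Bᵢ)` over finite measurable partitions of `B`. A σ-maxitive
`ν` satisfies `ν(⋃ Bₙ) = supₙ ν(Bₙ) ≤ ∑ ν(Bₙ)`, so it is σ-subadditive and `|ν|` is a σ-additive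
measure, of total mass at most the variation of `ν`, hence finite. It dominates `ν`, and since a
maxitive `ν` is monotone, `|ν|(B) = 0` whenever `ν(B) = 0`: `|ν|` witnesses that `ν` is essential.
-/

lemma MeasurableSet.accumulate [MeasurableSpace E] {B : ℕ → Set E}
    (hB : ∀ n, MeasurableSet (B n)) (n : ℕ) : MeasurableSet (accumulate B n) := by
  rw [accumulate_def]
  exact .iUnion fun k => .iUnion fun _ => hB k

namespace Maxitive

variable [MeasurableSpace E] {ν : Set E → ℝ≥0∞}

lemma mono (hν : Maxitive ν) {A B : Set E} (hA : MeasurableSet A) (hB : MeasurableSet B)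
    (hAB : A ⊆ B) : ν A ≤ ν B := by
  simpa [union_eq_self_of_subset_left hAB] using (hν.2 A B hA hB).ge

lemma apply_accumulate_le_iSup (hν : Maxitive ν) {B : ℕ → Set E}
    (hB : ∀ n, MeasurableSet (B n)) (n : ℕ) : ν (accumulate B n) ≤ ⨆ k, ν (B k) := by
  induction n with
  | zero => simpa using le_iSup (fun k => ν (B k)) 0
  | succ n ih =>
    rw [accumulate_succ, hν.2 _ _ (.accumulate hB n) (hB _)]
    exact max_le ih (le_iSup (fun k => ν (B k)) _)

end Maxitive

namespace SigmaMaxitive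

variable [MeasurableSpace E] {ν : Set E → ℝ≥0∞}

lemma apply_iUnion (hν : SigmaMaxitive ν) {B : ℕ → Set E} (hB : ∀ n, MeasurableSet (B n)) :
    ν (⋃ n, B n) = ⨆ n, ν (B n) := by
  refine le_antisymm ?_ (iSup_le fun n => hν.1.mono (hB n) (.iUnion hB) (subset_iUnion B n))
  rw [← iUnion_accumulate, hν.2 _ (.accumulate hB) monotone_accumulate]
  exact iSup_le (hν.1.apply_accumulate_le_iSup hB)

lemma isSigmaSubadditiveSetFun (hν : SigmaMaxitive ν) : IsSigmaSubadditiveSetFun ν := by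
  intro B _
  rw [hν.apply_iUnion fun n => (B n).2]
  exact iSup_le fun n => ENNReal.le_tsum n

end SigmaMaxitive

section PreVariation

variable [MeasurableSpace E] {ν : Set E → ℝ≥0∞}

lemma le_preVariationFun (h0 : ν ∅ = 0) {s : Set E} (hs : MeasurableSet s) :
    ν s ≤ preVariationFun ν s := by
  by_cases hbot : (⟨s, hs⟩ : Subtype MeasurableSet) = ⊥
  · have : s = ∅ := congrArg Subtype.val hbot
    simp [this, h0]
  · simpa using preVariation.sum_le ν hs (Finpartition.indiscrete hbot)

lemma Maxitive.preVariationFun_eq_zero (hν : Maxitive ν) {s : Set E} (hs0 : ν s = 0) :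
    preVariationFun ν s = 0 := by
  by_cases hs : MeasurableSet s
  · rw [preVariationFun_apply ν hs]
    refine ENNReal.iSup_eq_zero.mpr fun P => Finset.sum_eq_zero fun p hp => ?_
    exact nonpos_iff_eq_zero.mp (hs0 ▸ hν.mono p.2 hs (P.le hp))
  · exact preVariationFun_of_not_measurableSet ν hs

lemma Finpartition.isFinMeasPartition_map_val
    (P : Finpartition (⟨univ, .univ⟩ : Subtype (MeasurableSet : Set E → Prop))) :
    IsFinMeasPartition (P.parts.map (Function.Embedding.subtype _)) := by
  refine ⟨?_, ?_, ?_⟩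
  · simp only [Finset.mem_map, Function.Embedding.subtype_apply]
    rintro _ ⟨p, -, rfl⟩
    exact p.2
  · rw [Finset.coe_map, Function.Embedding.coe_subtype,
      Subtype.val_injective.injOn.pairwise_image]
    exact P.pairwiseDisjoint_apply (fun _ _ => rfl) rfl
  · rw [Finset.coe_map, Function.Embedding.coe_subtype, sUnion_image,
      Finset.set_biUnion_coe, ← Finset.sup_set_eq_biUnion]
    exact P.sup_parts_apply (fun _ _ => rfl) rfl

lemma preVariationFun_univ_le_variation : preVariationFun ν univ ≤ variation ν := by
  rw [preVariationFun_apply ν .univ]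
  exact iSup_le fun P => (Finset.sum_map P.parts (Function.Embedding.subtype _) ν).symm.trans_le
    (le_iSup₂_of_le _ (Finpartition.isFinMeasPartition_map_val P) le_rfl)

end PreVariation

/-- Every σ-maxitive measure of bounded variation is finite and essential. -/
theorem sigmaMaxitive_boundedVariation_finite_essential [MeasurableSpace E]
    (ν : Set E → ℝ≥0∞) (hν : SigmaMaxitive ν) (hbv : variation ν < ⊤) :
    (∀ B : Set E, MeasurableSet B → ν B < ⊤) ∧ Essential ν := by
  set m := preVariation ν hν.isSigmaSubadditiveSetFun hν.1.1
  have hm : ∀ B, MeasurableSet B → m B = preVariationFun ν B := fun B hB =>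
    VectorMeasure.ennrealToMeasure_apply hB
  have hν_le_m : ∀ B, MeasurableSet B → ν B ≤ m B := fun B hB =>
    (hm B hB).symm ▸ le_preVariationFun hν.1.1 hB
  have : IsFiniteMeasure m :=
    ⟨(hm univ .univ).symm ▸ preVariationFun_univ_le_variation.trans_lt hbv⟩
  refine ⟨fun B hB => (hν_le_m B hB).trans_lt (measure_lt_top m B), m, inferInstance,
    fun B hB => ⟨fun h => h.trans_le (hν_le_m B hB), fun h => ?_⟩⟩
  rw [hm B hB] at h
  exact pos_of_ne_zero fun h0 => h.ne' (hν.1.preVariationFun_eq_zero h0)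
end

section
/- A σ-maxitive measure on a σ-algebra 𝓑 is optimal if and only if it is exhaustive. -/
open scoped ENNReal
open Set Filter MeasureTheory

variable {E : Type*}

/-- `ν` is exhaustive: `ν (Bₙ) → 0` along every pairwise disjoint sequence of
measurable sets. -/
def Exhaustive [MeasurableSpace E] (ν : Set E → ℝ≥0∞) : Prop :=
  ∀ B : ℕ → Set E, (∀ n, MeasurableSet (B n)) →
    (Pairwise fun m n => Disjoint (B m) (B n)) →
    Tendsto (fun n => ν (B n)) atTop (nhds 0)

/-! Continuity from below is σ-maxitivity itself. If `ν` is continuous from above and `(Bₙ)` is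
disjoint, the tails `⋃_{k ≥ n} B_k` decrease to `∅` and dominate `Bₙ`, so `ν Bₙ → 0`. Conversely,
if `Bₙ` decreases to `B`, maxitivity gives `ν Bₙ = max (ν B) (ν (Bₙ \ B))`, and `Bₙ \ B` is the
increasing union of the sets `Bₙ \ B_{n+j}`, each covered by the disjoint sets `B_k \ B_{k+1}`,
`k ≥ n`; so σ-maxitivity bounds `ν (Bₙ \ B)` by `sup_{k ≥ n} ν (B_k \ B_{k+1})`, which tends to `0`
by exhaustivity. -/

theorem tendsto_iSup_ge_of_tendsto {α : Type*} [CompleteLinearOrder α] [TopologicalSpace α]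
    [OrderTopology α] {u : ℕ → α} {a : α} (hu : Tendsto u atTop (nhds a)) :
    Tendsto (fun n => ⨆ k ≥ n, u k) atTop (nhds a) := by
  have hanti : Antitone fun n => ⨆ k ≥ n, u k :=
    fun m n hmn => biSup_mono fun k hk => hmn.trans hk
  simpa only [← limsup_eq_iInf_iSup_of_nat, hu.limsup_eq] using tendsto_atTop_iInf hanti

theorem iInter_iUnion_ge_eq_empty_of_pairwise_disjoint {α : Type*} {B : ℕ → Set α}
    (hB : Pairwise fun m n => Disjoint (B m) (B n)) : ⋂ n, ⋃ k ≥ n, B k = ∅ := by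
  refine eq_empty_of_forall_notMem fun x hx => ?_
  simp only [mem_iInter, mem_iUnion, exists_prop] at hx
  obtain ⟨k, -, hk⟩ := hx 0
  obtain ⟨l, hl, hxl⟩ := hx (k + 1)
  exact (hB (show k ≠ l by omega)).le_bot ⟨hk, hxl⟩

theorem Antitone.pairwise_disjoint_sdiff_succ {α : Type*} {B : ℕ → Set α} (hB : Antitone B) :
    Pairwise fun m n => Disjoint (B m \ B (m + 1)) (B n \ B (n + 1)) :=
  (pairwise_disjoint_on _).2 fun _ _ hmn =>
    disjoint_left.2 fun _ hxm hxn => hxm.2 (hB (Nat.succ_le_of_lt hmn) hxn.1)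

section

variable [MeasurableSpace E] {ν : Set E → ℝ≥0∞}

theorem Maxitive.mono_s17 (hν : Maxitive ν) {A B : Set E} (hA : MeasurableSet A)
    (hB : MeasurableSet B) (hAB : A ⊆ B) : ν A ≤ ν B := by
  rw [← union_eq_self_of_subset_left hAB, hν.2 A B hA hB]
  exact le_max_left _ _

theorem Maxitive.diff_le_iSup_diff_succ (hν : Maxitive ν) {B : ℕ → Set E}
    (hB : ∀ n, MeasurableSet (B n)) (n j : ℕ) :
    ν (B n \ B (j + n)) ≤ ⨆ k ≥ n, ν (B k \ B (k + 1)) := by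
  induction j with
  | zero => simp [hν.1]
  | succ j ih =>
    have hsub : B n \ B (j + 1 + n) ⊆ (B n \ B (j + n)) ∪ (B (j + n) \ B (j + n + 1)) := by
      rw [Nat.add_right_comm j 1 n]
      exact sdiff_triangle _ _ _
    calc ν (B n \ B (j + 1 + n))
        ≤ ν ((B n \ B (j + n)) ∪ (B (j + n) \ B (j + n + 1))) :=
          hν.mono_s17 ((hB _).diff (hB _)) (((hB _).diff (hB _)).union ((hB _).diff (hB _))) hsub
      _ = max (ν (B n \ B (j + n))) (ν (B (j + n) \ B (j + n + 1))) :=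
          hν.2 _ _ ((hB _).diff (hB _)) ((hB _).diff (hB _))
      _ ≤ ⨆ k ≥ n, ν (B k \ B (k + 1)) :=
          max_le ih (le_iSup₂_of_le (j + n) (Nat.le_add_left n j) le_rfl)

theorem Maxitive.exhaustive_of_contFromAbove (hν : Maxitive ν) (habove : ContFromAbove ν) :
    Exhaustive ν := by
  intro B hB hdisj
  have hT : ∀ n, MeasurableSet (⋃ k ≥ n, B k) :=
    fun n => MeasurableSet.biUnion (to_countable _) fun k _ => hB k
  have hlim := habove _ hT fun m n hmn => biUnion_subset_biUnion_left fun k hk => hmn.trans hk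
  rw [iInter_iUnion_ge_eq_empty_of_pairwise_disjoint hdisj, hν.1] at hlim
  exact tendsto_of_tendsto_of_tendsto_of_le_of_le tendsto_const_nhds hlim (fun _ => zero_le)
    fun n => hν.mono_s17 (hB n) (hT n) (subset_biUnion_of_mem (le_refl n))

theorem SigmaMaxitive.contFromBelow (hν : SigmaMaxitive ν) : ContFromBelow ν := by
  intro B hB hmono
  rw [hν.2 B hB hmono]
  exact tendsto_atTop_iSup fun m n hmn => hν.1.mono_s17 (hB m) (hB n) (hmono hmn)

theorem SigmaMaxitive.diff_iInter_le_iSup_diff_succ (hν : SigmaMaxitive ν) {B : ℕ → Set E}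
    (hB : ∀ n, MeasurableSet (B n)) (hanti : Antitone B) (n : ℕ) :
    ν (B n \ ⋂ k, B k) ≤ ⨆ k ≥ n, ν (B k \ B (k + 1)) := by
  have hmono : Monotone fun j => B n \ B (j + n) :=
    fun i j hij => sdiff_subset_sdiff_right (hanti (by omega))
  rw [← hanti.iInter_nat_add n, sdiff_iInter, hν.2 _ (fun j => (hB n).diff (hB _)) hmono]
  exact iSup_le fun j => hν.1.diff_le_iSup_diff_succ hB n j

theorem SigmaMaxitive.contFromAbove_of_exhaustive (hν : SigmaMaxitive ν) (hex : Exhaustive ν) :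
    ContFromAbove ν := by
  intro B hB hanti
  have hI : MeasurableSet (⋂ k, B k) := MeasurableSet.iInter hB
  have htail : Tendsto (fun n => ⨆ k ≥ n, ν (B k \ B (k + 1))) atTop (nhds 0) :=
    tendsto_iSup_ge_of_tendsto <|
      hex _ (fun n => (hB n).diff (hB _)) hanti.pairwise_disjoint_sdiff_succ
  have hupper : ∀ n, ν (B n) ≤ max (ν (⋂ k, B k)) (⨆ k ≥ n, ν (B k \ B (k + 1))) := by
    intro n
    rw [← union_sdiff_cancel (iInter_subset B n), hν.1.2 _ _ hI ((hB n).diff hI)]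
    exact max_le_max le_rfl (hν.diff_iInter_le_iSup_diff_succ hB hanti n)
  have hlim : Tendsto (fun n => max (ν (⋂ k, B k)) (⨆ k ≥ n, ν (B k \ B (k + 1)))) atTop
      (nhds (ν (⋂ k, B k))) := by
    simpa using tendsto_const_nhds.max htail
  exact tendsto_of_tendsto_of_tendsto_of_le_of_le tendsto_const_nhds hlim
    (fun n => hν.1.mono_s17 hI (hB n) (iInter_subset B n)) hupper

end

/-- A σ-maxitive measure is optimal if and only if it is exhaustive. -/
theorem sigmaMaxitive_optimal_iff_exhaustive [MeasurableSpace E]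
    (ν : Set E → ℝ≥0∞) (hν : SigmaMaxitive ν) :
    Optimal ν ↔ Exhaustive ν :=
  ⟨fun h => h.1.exhaustive_of_contFromAbove h.2.2,
    fun h => ⟨hν.1, hν.contFromBelow, hν.contFromAbove_of_exhaustive h⟩⟩
end
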